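/- arXiv:2106.16178 — 4 statements merged into one kernel-verified Lean document; each statement's English description precedes it below -/
import Mathlib

section
/- Let L be a finitely generated free ℤ-module equipped with a symmetric ℤ-valued bilinear form (·,·) that is even and unimodular, and let ρ ∈ L be a primitive isotropic vector (i.e. (ρ,ρ) = 0 and ρ = k·x with k ∈ ℤ, x ∈ L implies k = 1 or k = -1). Then there exists ρ' ∈ L with (ρ',ρ') = 0 and (ρ,ρ') = 1. -/
/-!
Let `n` generate the ideal of values of `(ρ, ·)`. Then `(ρ, ·) = n • g` for a functional `g`,
which unimodularity writes as `g = (y, ·)`, so `ρ = n • y` and primitivity forces `n = ±1`.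
Hence `(ρ, σ) = 1` for some `σ`, and evenness of `(σ, σ) = 2k` lets us correct `σ` to the
isotropic vector `σ - k • ρ`.
-/

theorem LinearMap.exists_eq_apply_smul {M : Type*} [AddCommGroup M] [Module ℤ M]
    (f : M →ₗ[ℤ] ℤ) :
    ∃ (x₀ : M) (g : M →ₗ[ℤ] ℤ), f = f x₀ • g := by
  obtain ⟨x₀, hx₀⟩ : Submodule.IsPrincipal.generator (LinearMap.range f) ∈ LinearMap.range f :=
    Submodule.IsPrincipal.generator_mem _
  have hdvd : ∀ x, f x₀ ∣ f x := fun x => by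
    rw [hx₀, ← Ideal.mem_span_singleton, Ideal.span_singleton_generator]
    exact LinearMap.mem_range_self f x
  refine ⟨x₀, ⟨⟨fun x => f x / f x₀, fun a b => ?_⟩, fun m a => ?_⟩, ?_⟩
  · simp only [map_add, Int.add_ediv_of_dvd_right (hdvd b)]
  · simp only [RingHom.id_apply, smul_eq_mul]
    rw [f.map_smul, smul_eq_mul, Int.mul_ediv_assoc m (hdvd a)]
  · ext x
    exact (Int.mul_ediv_cancel' (hdvd x)).symm

theorem exists_apply_eq_one_of_primitive {L : Type*} [AddCommGroup L] [Module ℤ L]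
    (B : L →ₗ[ℤ] L →ₗ[ℤ] ℤ) (hunimod : Function.Bijective (B : L → (L →ₗ[ℤ] ℤ)))
    (ρ : L) (hprim : ∀ (k : ℤ) (x : L), ρ = k • x → k = 1 ∨ k = -1) :
    ∃ σ : L, B ρ σ = 1 := by
  obtain ⟨x₀, g, hg⟩ := (B ρ).exists_eq_apply_smul
  obtain ⟨y, rfl⟩ := hunimod.2 g
  have hρ : ρ = B ρ x₀ • y := hunimod.1 (by rw [map_zsmul]; exact hg)
  rcases hprim _ _ hρ with h | h
  · exact ⟨x₀, h⟩
  · exact ⟨-x₀, by rw [map_neg, h, neg_neg]⟩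

theorem exists_isotropic_of_apply_eq_one {R M : Type*} [CommRing R] [AddCommGroup M]
    [Module R M] (B : M →ₗ[R] M →ₗ[R] R) {ρ σ : M} (hiso : B ρ ρ = 0)
    (hρσ : B ρ σ = 1) (hσρ : B σ ρ = 1) {k : R} (hk : B σ σ = 2 * k) :
    ∃ ρ' : M, B ρ' ρ' = 0 ∧ B ρ ρ' = 1 :=
  ⟨σ - k • ρ, by simp only [map_sub, map_smul, LinearMap.sub_apply, LinearMap.smul_apply,
    hiso, hρσ, hσρ, hk, smul_eq_mul]; ring, by simp [hiso, hρσ]⟩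

theorem primitive_isotropic_complement_general {L : Type*} [AddCommGroup L] [Module ℤ L]
    (B : L →ₗ[ℤ] L →ₗ[ℤ] ℤ) (hsymm : ∀ x y : L, B x y = B y x)
    (heven : ∀ x : L, ∃ k : ℤ, B x x = 2 * k)
    (hunimod : Function.Bijective (B : L → (L →ₗ[ℤ] ℤ)))
    (ρ : L) (hiso : B ρ ρ = 0)
    (hprim : ∀ (k : ℤ) (x : L), ρ = k • x → k = 1 ∨ k = -1) :
    ∃ ρ' : L, B ρ' ρ' = 0 ∧ B ρ ρ' = 1 := by
  obtain ⟨σ, hρσ⟩ := exists_apply_eq_one_of_primitive B hunimod ρ hprim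
  obtain ⟨k, hk⟩ := heven σ
  exact exists_isotropic_of_apply_eq_one B hiso hρσ (hsymm σ ρ ▸ hρσ) hk

/-- In an even unimodular lattice, every primitive isotropic vector `ρ` can be
completed by an isotropic vector `ρ'` with `(ρ, ρ') = 1`. -/
theorem primitive_isotropic_complement {L : Type*} [AddCommGroup L] [Module ℤ L]
    [Module.Free ℤ L] [Module.Finite ℤ L]
    (B : L →ₗ[ℤ] L →ₗ[ℤ] ℤ) (hsymm : ∀ x y : L, B x y = B y x)
    (heven : ∀ x : L, ∃ k : ℤ, B x x = 2 * k)
    (hunimod : Function.Bijective (B : L → (L →ₗ[ℤ] ℤ)))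
    (ρ : L) (hiso : B ρ ρ = 0)
    (hprim : ∀ (k : ℤ) (x : L), ρ = k • x → k = 1 ∨ k = -1) :
    ∃ ρ' : L, B ρ' ρ' = 0 ∧ B ρ ρ' = 1 :=
  primitive_isotropic_complement_general B hsymm heven hunimod ρ hiso hprim
end

section
/- Let a, b, c, d ∈ ℤ satisfy ac + bd = 0, with (a,b) ≠ (0,0) and (c,d) ≠ (0,0). Then there exist unique integers p, q, m, n with gcd(p,q) = 1, q > 0 and p ≠ 0 such that a = m·p, b = −n·p, c = n·q and d = m·q; equivalently, (a,b,c,d) = m·(p,0,0,q) + n·(0,−p,q,0). -/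
/-! Isotropy `ac + bd = 0` says that `(a, -b)` and `(d, c)` are parallel in `ℤ²`. Writing
`(d, c) = g • w` with `g > 0` and `w` primitive, Bézout makes `(a, -b)` an integer
multiple `α • w` as well; splitting off `gcd(α, g)` from the two multipliers `α, g` gives the
coprime pair `(p, q)` and the vector `(m, n)`. Uniqueness: both decompositions give
`p/q = p'/q'`, and a reduced fraction with positive denominator is unique. -/

theorem IsCoprime.exists_eq_mul_of_mul_eq_mul {R : Type*} [CommRing R] {m n x y : R}
    (hmn : IsCoprime m n) (h : x * n = y * m) : ∃ α, x = α * m ∧ y = α * n := by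
  obtain ⟨u, v, huv⟩ := hmn
  exact ⟨x * u + y * v, by linear_combination (-x) * huv + v * h,
    by linear_combination (-y) * huv - u * h⟩

theorem Int.exists_coprime_mul_of_mul_eq_mul {x₁ x₂ y₁ y₂ : ℤ} (h : x₁ * y₂ = x₂ * y₁)
    (hy : ¬(y₁ = 0 ∧ y₂ = 0)) :
    ∃ s t v₁ v₂ : ℤ, Int.gcd s t = 1 ∧ 0 < t ∧
      x₁ = v₁ * s ∧ x₂ = v₂ * s ∧ y₁ = v₁ * t ∧ y₂ = v₂ * t := by
  obtain ⟨g, w₁, w₂, hg, hw, rfl, rfl⟩ :=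
    Int.exists_gcd_one' (Int.gcd_pos_iff.mpr (not_and_or.mp hy))
  have hg' : (g : ℤ) ≠ 0 := by positivity
  obtain ⟨α, rfl, rfl⟩ := (Int.isCoprime_iff_gcd_eq_one.mpr hw).exists_eq_mul_of_mul_eq_mul
    (x := x₁) (y := x₂) (mul_right_cancel₀ hg' (by linear_combination h))
  obtain ⟨k, s, t, -, hst, rfl, ht⟩ :=
    Int.exists_gcd_one' (Int.gcd_pos_of_ne_zero_right α hg')
  have ht_pos : 0 < t := pos_of_mul_pos_left (ht ▸ Int.natCast_pos.mpr hg) (by positivity)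
  exact ⟨s, t, w₁ * k, w₂ * k, hst, ht_pos, by ring, by ring,
    by rw [ht]; ring, by rw [ht]; ring⟩

theorem Int.eq_of_mul_eq_mul_of_gcd_eq_one {s t s' t' : ℤ} (hst : Int.gcd s t = 1) (ht : 0 < t)
    (hst' : Int.gcd s' t' = 1) (ht' : 0 < t') (h : s * t' = s' * t) : s = s' ∧ t = t' :=
  Rat.div_int_inj ht ht' hst hst' <| (div_eq_div_iff (by positivity) (by positivity)).mpr
    (by exact_mod_cast h)

theorem Int.eq_of_coprime_mul_eq_coprime_mul {s t v₁ v₂ s' t' v₁' v₂' : ℤ}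
    (hst : Int.gcd s t = 1) (ht : 0 < t) (hst' : Int.gcd s' t' = 1) (ht' : 0 < t')
    (hv : ¬(v₁ * s = 0 ∧ v₂ * s = 0))
    (h₁ : v₁ * s = v₁' * s') (h₂ : v₂ * s = v₂' * s')
    (h₃ : v₁ * t = v₁' * t') (h₄ : v₂ * t = v₂' * t') :
    s = s' ∧ t = t' ∧ v₁ = v₁' ∧ v₂ = v₂' := by
  have hcross : s * t' = s' * t := by
    by_contra hne
    have hne' : s * t' - s' * t ≠ 0 := sub_ne_zero.mpr hne
    have hv₁ : v₁ * (s * t' - s' * t) = 0 := by linear_combination t' * h₁ - s' * h₃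
    have hv₂ : v₂ * (s * t' - s' * t) = 0 := by linear_combination t' * h₂ - s' * h₄
    exact hv ⟨by simp [(mul_eq_zero.mp hv₁).resolve_right hne'],
      by simp [(mul_eq_zero.mp hv₂).resolve_right hne']⟩
  obtain ⟨rfl, rfl⟩ := Int.eq_of_mul_eq_mul_of_gcd_eq_one hst ht hst' ht' hcross
  exact ⟨rfl, rfl, mul_right_cancel₀ ht.ne' h₃, mul_right_cancel₀ ht.ne' h₄⟩

/-- Classification of the isotropic vectors of `II₂,₂` with nonzero positive and
negative parts: if `ac + bd = 0` with `(a,b) ≠ (0,0)` and `(c,d) ≠ (0,0)`, then there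
are unique integers `p, q, m, n` with `gcd(p,q) = 1`, `q > 0`, `p ≠ 0` such that
`a = m·p`, `b = −n·p`, `c = n·q`, `d = m·q`. -/
theorem isotropic_classification (a b c d : ℤ) (h : a * c + b * d = 0)
    (hab : ¬(a = 0 ∧ b = 0)) (hcd : ¬(c = 0 ∧ d = 0)) :
    ∃! x : ℤ × ℤ × ℤ × ℤ,
      Int.gcd x.1 x.2.1 = 1 ∧ 0 < x.2.1 ∧ x.1 ≠ 0 ∧
      a = x.2.2.1 * x.1 ∧ b = -(x.2.2.2 * x.1) ∧
      c = x.2.2.2 * x.2.1 ∧ d = x.2.2.1 * x.2.1 := by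
  obtain ⟨p, q, m, n, hpq, hq, ha, hb, hd, hc⟩ :=
    Int.exists_coprime_mul_of_mul_eq_mul (x₁ := a) (x₂ := -b) (y₁ := d) (y₂ := c)
      (by linear_combination h) (fun ⟨hd, hc⟩ => hcd ⟨hc, hd⟩)
  have hmn : ¬(m * p = 0 ∧ n * p = 0) := fun ⟨h₁, h₂⟩ => hab ⟨ha.trans h₁, by linarith⟩
  refine ⟨(p, q, m, n), ⟨hpq, hq, fun hp => hmn (by simp [show p = 0 from hp]), ha,
    by linarith, hc, hd⟩, ?_⟩
  rintro ⟨p', q', m', n'⟩ ⟨hpq', hq', -, ha', hb', hc', hd'⟩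
  obtain ⟨rfl, rfl, rfl, rfl⟩ := Int.eq_of_coprime_mul_eq_coprime_mul hpq hq hpq' hq' hmn
    (ha.symm.trans ha') (by linarith) (hd.symm.trans hd') (hc.symm.trans hc')
  rfl
end

section
/- Let g be a Lie algebra over ℂ and B : g × g → ℂ a symmetric bilinear form that is invariant, i.e. B([x,y],z) = B(x,[y,z]) for all x,y,z ∈ g. Then on the ℂ-vector space ĝ = (g ⊗ ℂ[t,t⁻¹]) ⊕ ℂ·c ⊕ ℂ·d there exists a Lie algebra structure whose bracket satisfies, for all x, y ∈ g and m, n ∈ ℤ: [x ⊗ tᵐ, y ⊗ tⁿ] = [x,y] ⊗ t^{m+n} + B(x,y)·m·δ_{m,−n}·c, [c, x ⊗ tᵐ] = 0, [c,d] = 0, and [d, x ⊗ tᵐ] = m·(x ⊗ tᵐ). -/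
open TensorProduct

set_option linter.unreachableTactic false
set_option linter.unusedTactic false

namespace AffineKM
open LaurentPolynomial

noncomputable def Dt : LaurentPolynomial ℂ →ₗ[ℂ] LaurentPolynomial ℂ :=
  (AddMonoidAlgebra.coeffLinearEquiv ℂ).symm.toLinearMap ∘ₗ
    Finsupp.lsum ℂ (fun n : ℤ => (n : ℂ) • Finsupp.lsingle n) ∘ₗ
    (AddMonoidAlgebra.coeffLinearEquiv ℂ).toLinearMap

theorem Dt_T (m : ℤ) : Dt (T m) = (m : ℂ) • T m := by
  rw [Dt, T]
  simp only [LinearMap.comp_apply, LinearEquiv.coe_coe, AddMonoidAlgebra.coeffLinearEquiv_apply,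
    AddMonoidAlgebra.coeff_single, Finsupp.lsum_single, LinearMap.smul_apply,
    Finsupp.lsingle_apply, AddMonoidAlgebra.coeffLinearEquiv_symm_apply]
  rfl

theorem C_mul_T_eq (a : ℂ) (n : ℤ) : (C a) * T n = a • T n := by
  rw [← single_eq_C_mul_T]
  rw [T, AddMonoidAlgebra.smul_single, smul_eq_mul, mul_one]

theorem Dt_mul (f g : LaurentPolynomial ℂ) : Dt (f * g) = Dt f * g + f * Dt g := by
  induction f using LaurentPolynomial.induction_on' with
  | add p q hp hq => simp [add_mul, map_add, hp, hq]; ring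
  | C_mul_T n a =>
    induction g using LaurentPolynomial.induction_on' with
    | add p q hp hq => simp [mul_add, map_add, hp, hq]; ring
    | C_mul_T m b =>
      rw [C_mul_T_eq, C_mul_T_eq]
      simp only [smul_mul_smul_comm, ← T_add, map_smul, Dt_T, smul_smul, smul_mul_assoc,
        mul_smul_comm]
      push_cast
      module

noncomputable def eps : LaurentPolynomial ℂ →ₗ[ℂ] ℂ :=
  Finsupp.lapply 0 ∘ₗ (AddMonoidAlgebra.coeffLinearEquiv ℂ).toLinearMap

theorem eps_T (n : ℤ) : eps (T n) = if n = 0 then 1 else 0 := by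
  rw [eps, T]
  simp [Finsupp.single_apply, eq_comm]

theorem eps_Dt (f : LaurentPolynomial ℂ) : eps (Dt f) = 0 := by
  induction f using LaurentPolynomial.induction_on' with
  | add p q hp hq => simp [map_add, hp, hq]
  | C_mul_T n a =>
    rw [C_mul_T_eq, map_smul, Dt_T, map_smul, map_smul, eps_T]
    rcases eq_or_ne n 0 with h | h <;> simp [h]

noncomputable def psi : LaurentPolynomial ℂ →ₗ[ℂ] LaurentPolynomial ℂ →ₗ[ℂ] ℂ :=
  ((LinearMap.mul ℂ (LaurentPolynomial ℂ)).comp Dt).compr₂ eps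

theorem psi_apply (f g : LaurentPolynomial ℂ) : psi f g = eps (Dt f * g) := rfl

theorem psi_swap (f g : LaurentPolynomial ℂ) : psi f g + psi g f = 0 := by
  rw [psi_apply, psi_apply, ← map_add, mul_comm (Dt g) f, ← Dt_mul, eps_Dt]

theorem psi_Dt (f g : LaurentPolynomial ℂ) : psi (Dt f) g + psi f (Dt g) = 0 := by
  rw [psi_apply, psi_apply, ← map_add, ← Dt_mul, eps_Dt]

theorem psi_cyc (f g h : LaurentPolynomial ℂ) :
    psi f (g * h) + psi g (h * f) + psi h (f * g) = 0 := by
  rw [psi_apply, psi_apply, psi_apply, ← map_add, ← map_add]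
  have : Dt f * (g * h) + Dt g * (h * f) + Dt h * (f * g) = Dt (f * g * h) := by
    rw [Dt_mul, Dt_mul]; ring
  rw [this, eps_Dt]

theorem psi_T (m n : ℤ) : psi (T m) (T n) = (m : ℂ) * (if m + n = 0 then 1 else 0) := by
  rw [psi_apply, Dt_T, smul_mul_assoc, map_smul, ← T_add, eps_T, smul_eq_mul]

section
variable {g : Type*} [LieRing g] [LieAlgebra ℂ g]

local notation "M" => g ⊗[ℂ] LaurentPolynomial ℂ

noncomputable def E : (g ⊗[ℂ] LaurentPolynomial ℂ) ≃ₗ[ℂ] (LaurentPolynomial ℂ ⊗[ℂ] g) :=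
  TensorProduct.comm ℂ g (LaurentPolynomial ℂ)

noncomputable def Lb : (g ⊗[ℂ] LaurentPolynomial ℂ) →ₗ[ℂ] (g ⊗[ℂ] LaurentPolynomial ℂ) →ₗ[ℂ]
    (g ⊗[ℂ] LaurentPolynomial ℂ) :=
  LinearMap.mk₂ ℂ (fun a b => E.symm ⁅E a, E b⁆)
    (fun a a' b => by
      show E.symm ⁅E (a + a'), E b⁆ = E.symm ⁅E a, E b⁆ + E.symm ⁅E a', E b⁆
      rw [map_add, add_lie (E a) (E a') (E b), map_add])
    (fun c a b => by
      show E.symm ⁅E (c • a), E b⁆ = c • E.symm ⁅E a, E b⁆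
      rw [map_smul, ← algebraMap_smul (LaurentPolynomial ℂ) c (E a),
        smul_lie ((algebraMap ℂ (LaurentPolynomial ℂ)) c) (E a) (E b),
        algebraMap_smul, map_smul])
    (fun a b b' => by
      show E.symm ⁅E a, E (b + b')⁆ = E.symm ⁅E a, E b⁆ + E.symm ⁅E a, E b'⁆
      rw [map_add, lie_add (E a) (E b) (E b'), map_add])
    (fun c a b => by
      show E.symm ⁅E a, E (c • b)⁆ = c • E.symm ⁅E a, E b⁆
      rw [map_smul, ← algebraMap_smul (LaurentPolynomial ℂ) c (E b),
        lie_smul ((algebraMap ℂ (LaurentPolynomial ℂ)) c) (E a) (E b),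
        algebraMap_smul, map_smul])

theorem Lb_tmul (x y : g) (f f' : LaurentPolynomial ℂ) :
    Lb (x ⊗ₜ[ℂ] f) (y ⊗ₜ[ℂ] f') = ⁅x, y⁆ ⊗ₜ[ℂ] (f * f') := by
  rw [Lb, LinearMap.mk₂_apply]
  rw [show E (x ⊗ₜ[ℂ] f) = f ⊗ₜ[ℂ] x from rfl, show E (y ⊗ₜ[ℂ] f') = f' ⊗ₜ[ℂ] y from rfl]
  rw [LieAlgebra.ExtendScalars.bracket_tmul]
  rfl

theorem Lb_self (a : M) : Lb a a = 0 := by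
  rw [Lb, LinearMap.mk₂_apply, lie_self, map_zero]

theorem Lb_skew (a b : M) : Lb a b = - Lb b a := by
  rw [Lb, LinearMap.mk₂_apply, LinearMap.mk₂_apply, ← lie_skew, map_neg]

theorem Lb_jacobi (a b c : M) : Lb a (Lb b c) + Lb b (Lb c a) + Lb c (Lb a b) = 0 := by
  simp only [Lb, LinearMap.mk₂_apply, LinearEquiv.apply_symm_apply]
  rw [← map_add, ← map_add, lie_jacobi, map_zero]

noncomputable def Dm : (g ⊗[ℂ] LaurentPolynomial ℂ) →ₗ[ℂ] (g ⊗[ℂ] LaurentPolynomial ℂ) :=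
  LinearMap.lTensor g Dt

theorem Dm_tmul (x : g) (f : LaurentPolynomial ℂ) : Dm (x ⊗ₜ[ℂ] f) = x ⊗ₜ[ℂ] (Dt f) := rfl

theorem Dm_deriv (a b : M) : Dm (Lb a b) = Lb (Dm a) b + Lb a (Dm b) := by
  induction a using TensorProduct.induction_on with
  | zero => simp
  | tmul x f =>
    induction b using TensorProduct.induction_on with
    | zero => simp
    | tmul y f' =>
      rw [Lb_tmul, Dm_tmul, Dm_tmul, Dm_tmul, Lb_tmul, Lb_tmul, Dt_mul, TensorProduct.tmul_add]
    | add b b' hb hb' =>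
      simp only [map_add, LinearMap.add_apply, hb, hb']
      abel
  | add a a' ha ha' =>
    simp only [map_add, LinearMap.add_apply, ha, ha']
    abel

variable (B : g →ₗ[ℂ] g →ₗ[ℂ] ℂ)

noncomputable def om : (g ⊗[ℂ] LaurentPolynomial ℂ) →ₗ[ℂ] (g ⊗[ℂ] LaurentPolynomial ℂ) →ₗ[ℂ] ℂ :=
  LinearMap.BilinForm.tmul B psi

theorem om_tmul (x y : g) (f f' : LaurentPolynomial ℂ) :
    om B (x ⊗ₜ[ℂ] f) (y ⊗ₜ[ℂ] f') = B x y * psi f f' := by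
  rw [om, LinearMap.BilinForm.tensorDistrib_tmul, smul_eq_mul, mul_comm]

variable (hsymm : ∀ x y : g, B x y = B y x)
variable (hinv : ∀ x y z : g, B ⁅x, y⁆ z = B x ⁅y, z⁆)

include hsymm in
theorem om_skew (a b : M) : om B a b + om B b a = 0 := by
  induction a using TensorProduct.induction_on with
  | zero => simp
  | tmul x f =>
    induction b using TensorProduct.induction_on with
    | zero => simp
    | tmul y f' =>
      rw [om_tmul, om_tmul, hsymm y x]
      linear_combination (B x y) * psi_swap f f'
    | add b b' hb hb' =>
      simp only [map_add, LinearMap.add_apply]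
      linear_combination hb + hb'
  | add a a' ha ha' =>
    simp only [map_add, LinearMap.add_apply]
    linear_combination ha + ha'

include hsymm in
theorem om_self (a : M) : om B a a = 0 := by
  linear_combination (om_skew B hsymm a a) / 2

theorem om_Dm (a b : M) : om B (Dm a) b + om B a (Dm b) = 0 := by
  induction a using TensorProduct.induction_on with
  | zero => simp
  | tmul x f =>
    induction b using TensorProduct.induction_on with
    | zero => simp
    | tmul y f' =>
      rw [Dm_tmul, Dm_tmul, om_tmul, om_tmul]
      linear_combination (B x y) * psi_Dt f f'
    | add b b' hb hb' =>
      simp only [map_add, LinearMap.add_apply]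
      linear_combination hb + hb'
  | add a a' ha ha' =>
    simp only [map_add, LinearMap.add_apply]
    linear_combination ha + ha'

include hsymm hinv in
theorem om_cyc (a b c : M) :
    om B a (Lb b c) + om B b (Lb c a) + om B c (Lb a b) = 0 := by
  induction a using TensorProduct.induction_on with
  | zero => simp
  | tmul x f =>
    induction b using TensorProduct.induction_on with
    | zero => simp
    | tmul y f' =>
      induction c using TensorProduct.induction_on with
      | zero => simp
      | tmul z f'' =>
        rw [Lb_tmul, Lb_tmul, Lb_tmul, om_tmul, om_tmul, om_tmul]
        have h1 : B y ⁅z, x⁆ = B x ⁅y, z⁆ := by rw [← hinv y z x, hsymm]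
        have h2 : B z ⁅x, y⁆ = B x ⁅y, z⁆ := by rw [← hinv z x y, hsymm, h1]
        rw [h1, h2]
        linear_combination (B x ⁅y, z⁆) * psi_cyc f f' f''
      | add c c' hc hc' =>
        simp only [map_add, LinearMap.add_apply]
        linear_combination hc + hc'
    | add b b' hb hb' =>
      simp only [map_add, LinearMap.add_apply]
      linear_combination hb + hb'
  | add a a' ha ha' =>
    simp only [map_add, LinearMap.add_apply]
    linear_combination ha + ha'

end
end AffineKM

section
open AffineKM
variable {g : Type*} [LieRing g] [LieAlgebra ℂ g] (B : g →ₗ[ℂ] g →ₗ[ℂ] ℂ)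

noncomputable def AffineKM.br :
    ((g ⊗[ℂ] LaurentPolynomial ℂ) × ℂ × ℂ) →ₗ[ℂ]
    ((g ⊗[ℂ] LaurentPolynomial ℂ) × ℂ × ℂ) →ₗ[ℂ]
    ((g ⊗[ℂ] LaurentPolynomial ℂ) × ℂ × ℂ) :=
  LinearMap.mk₂ ℂ
    (fun u v => (Lb u.1 v.1 + u.2.2 • Dm v.1 - v.2.2 • Dm u.1, om B u.1 v.1, 0))
    (fun u u' v => by
      simp only [Prod.fst_add, Prod.snd_add, map_add, LinearMap.add_apply, add_smul,
        Prod.mk_add_mk, Prod.mk.injEq]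
      refine ⟨by module, by first | trivial | ring, by first | trivial | ring⟩)
    (fun c u v => by
      simp only [Prod.smul_fst, Prod.smul_snd, map_smul, LinearMap.smul_apply, smul_eq_mul,
        Prod.smul_mk, Prod.mk.injEq, smul_smul]
      refine ⟨by module, by first | trivial | ring, by first | trivial | ring⟩)
    (fun u v v' => by
      simp only [Prod.fst_add, Prod.snd_add, map_add, LinearMap.add_apply, add_smul,
        Prod.mk_add_mk, Prod.mk.injEq]
      refine ⟨by module, by first | trivial | ring, by first | trivial | ring⟩)
    (fun c u v => by
      simp only [Prod.smul_fst, Prod.smul_snd, map_smul, LinearMap.smul_apply, smul_eq_mul,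
        Prod.smul_mk, Prod.mk.injEq, smul_smul]
      refine ⟨by module, by first | trivial | ring, by first | trivial | ring⟩)

theorem AffineKM.br_apply (u v : (g ⊗[ℂ] LaurentPolynomial ℂ) × ℂ × ℂ) :
    br B u v = (Lb u.1 v.1 + u.2.2 • Dm v.1 - v.2.2 • Dm u.1, om B u.1 v.1, 0) := rfl
end

open AffineKM in
/-- Given a Lie algebra `g` over ℂ with an invariant symmetric bilinear form `B`,
there is a Lie algebra structure on `ĝ = (g ⊗ ℂ[t,t⁻¹]) ⊕ ℂc ⊕ ℂd` whose bracket
satisfies the defining relations of the untwisted affine Lie algebra. -/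
theorem exists_affine_lie_bracket {g : Type*} [LieRing g] [LieAlgebra ℂ g]
    (B : g →ₗ[ℂ] g →ₗ[ℂ] ℂ)
    (hsymm : ∀ x y : g, B x y = B y x)
    (hinv : ∀ x y z : g, B ⁅x, y⁆ z = B x ⁅y, z⁆) :
    ∃ br : ((g ⊗[ℂ] LaurentPolynomial ℂ) × ℂ × ℂ) →ₗ[ℂ]
        ((g ⊗[ℂ] LaurentPolynomial ℂ) × ℂ × ℂ) →ₗ[ℂ]
        ((g ⊗[ℂ] LaurentPolynomial ℂ) × ℂ × ℂ),
      -- `br` is a Lie bracket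
      (∀ u, br u u = 0) ∧
      (∀ u v w, br u (br v w) + br v (br w u) + br w (br u v) = 0) ∧
      -- `[x ⊗ tᵐ, y ⊗ tⁿ] = [x,y] ⊗ t^{m+n} + B(x,y)·m·δ_{m,−n}·c`
      (∀ (x y : g) (m n : ℤ),
        br (x ⊗ₜ[ℂ] LaurentPolynomial.T m, 0, 0) (y ⊗ₜ[ℂ] LaurentPolynomial.T n, 0, 0)
          = (⁅x, y⁆ ⊗ₜ[ℂ] LaurentPolynomial.T (m + n),
             B x y * (m : ℂ) * (if m + n = 0 then 1 else 0), 0)) ∧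
      -- `[c, x ⊗ tᵐ] = 0`
      (∀ (x : g) (m : ℤ),
        br (0, 1, 0) (x ⊗ₜ[ℂ] LaurentPolynomial.T m, 0, 0) = 0) ∧
      -- `[c, d] = 0`
      (br (0, 1, 0) (0, 0, 1) = 0) ∧
      -- `[d, x ⊗ tᵐ] = m·(x ⊗ tᵐ)`
      (∀ (x : g) (m : ℤ),
        br (0, 0, 1) (x ⊗ₜ[ℂ] LaurentPolynomial.T m, 0, 0)
          = (m : ℂ) • (x ⊗ₜ[ℂ] LaurentPolynomial.T m, 0, 0)) := by
  refine ⟨AffineKM.br B, ?_, ?_, ?_, ?_, ?_, ?_⟩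
  · intro u
    rw [br_apply, Lb_self, om_self B hsymm]
    simp
  · intro u v w
    obtain ⟨a, p₁, q₁⟩ := u
    obtain ⟨b, p₂, q₂⟩ := v
    obtain ⟨c, p₃, q₃⟩ := w
    simp only [br_apply, Prod.mk_add_mk, Prod.mk.injEq, map_add, map_sub, map_smul,
      LinearMap.add_apply, LinearMap.sub_apply, LinearMap.smul_apply, zero_smul, sub_zero,
      smul_add, smul_sub, smul_smul, smul_eq_mul, Prod.mk_eq_zero]
    refine ⟨?_, ?_, by ring⟩
    · linear_combination (norm := module) Lb_jacobi a b c
        + q₁ • Dm_deriv b c + q₂ • Dm_deriv c a + q₃ • Dm_deriv a b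
        + q₁ • Lb_skew c (Dm b) + q₂ • Lb_skew a (Dm c) + q₃ • Lb_skew b (Dm a)
    · linear_combination om_cyc B hsymm hinv a b c
        + q₁ * (om_skew B hsymm c (Dm b)) - q₁ * (om_Dm B b c)
        + q₂ * (om_skew B hsymm a (Dm c)) - q₂ * (om_Dm B c a)
        + q₃ * (om_skew B hsymm b (Dm a)) - q₃ * (om_Dm B a b)
  · intro x y m n
    rw [br_apply]
    simp only [zero_smul, sub_zero, smul_zero, add_zero, zero_add, map_zero]
    rw [Lb_tmul, ← LaurentPolynomial.T_add, om_tmul, psi_T, mul_assoc]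
  · intro x m
    rw [br_apply]
    simp
  · rw [br_apply]
    simp
  · intro x m
    rw [br_apply]
    simp only [zero_smul, sub_zero, one_smul, map_zero, LinearMap.zero_apply,
      LinearMap.map_zero, zero_add]
    rw [Dm_tmul, Dt_T]
    simp [TensorProduct.tmul_smul, Prod.smul_mk]
end

section
/- Let L be a finitely generated free ℤ-module equipped with a symmetric ℤ-valued bilinear form (·,·) such that (α,α) ∈ 2ℤ for all α ∈ L. Then there exists a function ε : L × L → {1, −1} satisfying, for all α, β, γ ∈ L: (i) ε(α,β)·ε(α+β,γ) = ε(α,β+γ)·ε(β,γ); (ii) ε(α,β) = (−1)^{(α,β)}·ε(β,α); (iii) ε(α,−α) = (−1)^{(α,α)/2}; and (iv) ε(0,α) = ε(α,0) = 1. -/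
/-! Since `B` is even, `x ↦ B(x, x) / 2` is a quadratic form with polar form `B`; as `L` is free,
it is `x ↦ C(x, x)` for a bilinear form `C`, so `B = C + Cᵀ`. Then `ε(α, β) = (-1) ^ C(α, β)`
works: bilinearity of `C` gives the cocycle identity and the normalization, `C + Cᵀ = B` gives
the commutator `(-1) ^ B(α, β)`, and `C(α, α) = B(α, α) / 2` gives the value on `(α, -α)`. -/

namespace LinearMap

variable {M : Type*} [AddCommGroup M] [Module ℤ M]

theorem polar_half_diag_eq (B : M →ₗ[ℤ] M →ₗ[ℤ] ℤ) (hsymm : ∀ x y, B x y = B y x)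
    (heven : ∀ x, ∃ k : ℤ, B x x = 2 * k) (x y : M) :
    QuadraticMap.polar (fun z => B z z / 2) x y = B x y := by
  obtain ⟨kx, hx⟩ := heven x
  obtain ⟨ky, hy⟩ := heven y
  have hxy : B (x + y) (x + y) = B x x + 2 * B x y + B y y := by
    simp only [map_add, add_apply, hsymm y x]
    ring
  simp only [QuadraticMap.polar, hxy, hx, hy]
  omega

theorem exists_quadraticMap_polarBilin_eq (B : M →ₗ[ℤ] M →ₗ[ℤ] ℤ) (hsymm : ∀ x y, B x y = B y x)
    (heven : ∀ x, ∃ k : ℤ, B x x = 2 * k) :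
    ∃ Q : QuadraticMap ℤ M ℤ, QuadraticMap.polarBilin Q = B := by
  have hpolar := polar_half_diag_eq B hsymm heven
  refine ⟨QuadraticMap.ofPolar (fun x => B x x / 2) (fun a x => ?_) (fun x x' y => ?_)
    (fun a x y => ?_), ext₂ fun x y => hpolar x y⟩
  · obtain ⟨k, hk⟩ := heven x
    simp only [map_smul, smul_apply, hk, smul_eq_mul]
    rw [show a * (a * (2 * k)) = 2 * (a * a * k) by ring, Int.mul_ediv_cancel_left _ two_ne_zero,
      Int.mul_ediv_cancel_left _ two_ne_zero]
  · simp only [hpolar, map_add, add_apply]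
  · simp only [hpolar, map_smul, smul_apply]

theorem exists_add_flip_eq [Module.Free ℤ M] (B : M →ₗ[ℤ] M →ₗ[ℤ] ℤ)
    (hsymm : ∀ x y, B x y = B y x) (heven : ∀ x, ∃ k : ℤ, B x x = 2 * k) :
    ∃ C : M →ₗ[ℤ] M →ₗ[ℤ] ℤ, C + C.flip = B := by
  obtain ⟨Q, hQ⟩ := exists_quadraticMap_polarBilin_eq B hsymm heven
  obtain ⟨C, hC⟩ := BilinMap.toQuadraticMap_surjective Q
  exact ⟨C, by rw [← BilinMap.polarBilin_toQuadraticMap, hC, hQ]⟩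

def signCocycle (C : M →ₗ[ℤ] M →ₗ[ℤ] ℤ) (α β : M) : ℤˣ :=
  (C α β).negOnePow

variable (C : M →ₗ[ℤ] M →ₗ[ℤ] ℤ)

theorem signCocycle_mul_signCocycle_add (α β γ : M) :
    C.signCocycle α β * C.signCocycle (α + β) γ =
      C.signCocycle α (β + γ) * C.signCocycle β γ := by
  simp only [signCocycle, ← Int.negOnePow_add, map_add, add_apply]
  ring_nf

theorem signCocycle_eq_negOnePow_mul_swap (α β : M) :
    C.signCocycle α β = ((C + C.flip) α β).negOnePow * C.signCocycle β α := by
  simp only [signCocycle, add_apply, flip_apply, ← Int.negOnePow_add]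
  rw [add_assoc, ← two_mul, Int.negOnePow_add, Int.negOnePow_two_mul, mul_one]

theorem signCocycle_neg_right (α : M) : C.signCocycle α (-α) = (C α α).negOnePow := by
  simp only [signCocycle, map_neg, Int.negOnePow_neg]

@[simp]
theorem signCocycle_zero_left (α : M) : C.signCocycle 0 α = 1 := by
  simp [signCocycle]

@[simp]
theorem signCocycle_zero_right (α : M) : C.signCocycle α 0 = 1 := by
  simp [signCocycle]

end LinearMap

theorem exists_lattice_cocycle_general {L : Type*} [AddCommGroup L] [Module ℤ L]
    [Module.Free ℤ L]
    (B : L →ₗ[ℤ] L →ₗ[ℤ] ℤ) (hsymm : ∀ x y : L, B x y = B y x)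
    (heven : ∀ x : L, ∃ k : ℤ, B x x = 2 * k) :
    ∃ ε : L → L → ℤˣ,
      (∀ α β γ : L, ε α β * ε (α + β) γ = ε α (β + γ) * ε β γ) ∧
      (∀ α β : L, ε α β = (-1 : ℤˣ) ^ (B α β) * ε β α) ∧
      (∀ α : L, ε α (-α) = (-1 : ℤˣ) ^ (B α α / 2)) ∧
      (∀ α : L, ε 0 α = 1 ∧ ε α 0 = 1) := by
  obtain ⟨C, rfl⟩ := LinearMap.exists_add_flip_eq B hsymm heven
  refine ⟨C.signCocycle, C.signCocycle_mul_signCocycle_add,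
    C.signCocycle_eq_negOnePow_mul_swap, fun α => ?_, fun α => by simp⟩
  have hhalf : (C + C.flip) α α / 2 = C α α := by
    simp only [LinearMap.add_apply, LinearMap.flip_apply]
    omega
  rw [hhalf]
  exact C.signCocycle_neg_right α

/-- For an even lattice `L` there exists a 2-cocycle `ε : L × L → {±1}` with the
standard properties used to construct the twisted group algebra `ℂ{L}`. -/
theorem exists_lattice_cocycle {L : Type*} [AddCommGroup L] [Module ℤ L]
    [Module.Free ℤ L] [Module.Finite ℤ L]
    (B : L →ₗ[ℤ] L →ₗ[ℤ] ℤ) (hsymm : ∀ x y : L, B x y = B y x)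
    (heven : ∀ x : L, ∃ k : ℤ, B x x = 2 * k) :
    ∃ ε : L → L → ℤˣ,
      (∀ α β γ : L, ε α β * ε (α + β) γ = ε α (β + γ) * ε β γ) ∧
      (∀ α β : L, ε α β = (-1 : ℤˣ) ^ (B α β) * ε β α) ∧
      (∀ α : L, ε α (-α) = (-1 : ℤˣ) ^ (B α α / 2)) ∧
      (∀ α : L, ε 0 α = 1 ∧ ε α 0 = 1) :=
  exists_lattice_cocycle_general B hsymm heven
end
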